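/- (Example of Sec. III C: trace-norm computation and saturation of the lower bound for two Bell states.) In ℂ²⊗ℂ² (matrices indexed by Fin 2 × Fin 2), let ρ₁ = |φ⁺⟩⟨φ⁺| and ρ₂ = |φ⁻⟩⟨φ⁻| be the projectors onto the Bell states |φ^±⟩ = (|00⟩ ± |11⟩)/√2, and let σᵢ := (ρᵢ + I/2)/3 for i = 1, 2 (the closest separable states, obtained with random robustness R = 2). Then ‖(1/2)·ρ₁ − (1/2)·ρ₂‖₁ = 1 and ‖(1/2)·σ₁ − (1/2)·σ₂‖₁ = 1/3, so the Helstrom success probabilities are (1+1)/2 = 1 for the Bell ensemble and (1+1/3)/2 = 2/3 for the closest separable ensemble, and the lower bound of Theorem 2 holds with equality: 1 = (1 + 2)·(2/3) − 2·(1/2). -/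

import Mathlib

open Matrix
open scoped ComplexOrder

/-- The trace norm of a complex matrix: the trace of the positive semidefinite
square root of `Aᴴ * A`. -/
noncomputable def traceNorm {n : Type*} [Fintype n] [DecidableEq n]
    (A : Matrix n n ℂ) : ℝ :=
  ((((Matrix.posSemidef_conjTranspose_mul_self A).1.eigenvectorUnitary : Matrix n n ℂ) *
      diagonal (((↑) : ℝ → ℂ) ∘ (√·) ∘ (Matrix.posSemidef_conjTranspose_mul_self A).1.eigenvalues) *
      (star (Matrix.posSemidef_conjTranspose_mul_self A).1.eigenvectorUnitary :
        Matrix n n ℂ)).trace).re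

/-- The Bell state `|φ⁺⟩ = (|00⟩ + |11⟩)/√2` as a vector in `ℂ² ⊗ ℂ²`. -/
noncomputable def phiPlus : Fin 2 × Fin 2 → ℂ := fun x =>
  if x = (0, 0) then (Real.sqrt 2)⁻¹ else if x = (1, 1) then (Real.sqrt 2)⁻¹ else 0

/-- The Bell state `|φ⁻⟩ = (|00⟩ − |11⟩)/√2` as a vector in `ℂ² ⊗ ℂ²`. -/
noncomputable def phiMinus : Fin 2 × Fin 2 → ℂ := fun x =>
  if x = (0, 0) then (Real.sqrt 2)⁻¹ else if x = (1, 1) then -(Real.sqrt 2)⁻¹ else 0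

/-!
`ρ₁` and `ρ₂` are orthogonal rank-one projections, so `(ρ₁ - ρ₂)ᴴ (ρ₁ - ρ₂) = ρ₁ + ρ₂` is a
projection, hence its own square root, and `‖ρ₁ - ρ₂‖₁ = Tr (ρ₁ + ρ₂) = 2`. The identity parts
of `σ₁` and `σ₂` cancel, so both differences in the statement are real multiples of `ρ₁ - ρ₂`
(by `1/2` and `1/6`), and the trace norm is absolutely homogeneous.
-/

open scoped MatrixOrder

section TraceNorm

variable {n : Type*} [Fintype n] [DecidableEq n]

lemma traceNorm_eq_re_trace_sqrt (A : Matrix n n ℂ) :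
    traceNorm A = (CFC.sqrt (Aᴴ * A)).trace.re := by
  have hA := posSemidef_conjTranspose_mul_self A
  rw [CFC.sqrt_eq_real_sqrt _ hA.nonneg, cfcₙ_eq_cfc, hA.1.cfc_eq, IsHermitian.cfc,
    Unitary.conjStarAlgAut_apply]
  rfl

lemma traceNorm_eq_of_mul_self {A D : Matrix n n ℂ} (hD : D.PosSemidef) (h : D * D = Aᴴ * A) :
    traceNorm A = D.trace.re := by
  rw [traceNorm_eq_re_trace_sqrt, CFC.sqrt_unique h hD.nonneg]

lemma traceNorm_smul (c : ℝ) (A : Matrix n n ℂ) : traceNorm (c • A) = |c| * traceNorm A := by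
  have hD : (CFC.sqrt (Aᴴ * A)).PosSemidef := (CFC.sqrt_nonneg _).posSemidef
  have hDD := CFC.sqrt_mul_sqrt_self _ (posSemidef_conjTranspose_mul_self A).nonneg
  rw [traceNorm_eq_of_mul_self (hD.smul (abs_nonneg c)) ?_, traceNorm_eq_of_mul_self hD hDD,
    trace_smul, Complex.smul_re, smul_eq_mul]
  rw [smul_mul_smul, hDD, conjTranspose_smul, smul_mul_smul, abs_mul_abs_self, star_trivial]

lemma traceNorm_sub_of_isStarProjection {P Q : Matrix n n ℂ} (hP : IsStarProjection P)
    (hQ : IsStarProjection Q) (hPQ : P * Q = 0) : traceNorm (P - Q) = (P + Q).trace.re := by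
  have hQP : Q * P = 0 := by
    simpa [hP.isSelfAdjoint.star_eq, hQ.isSelfAdjoint.star_eq] using congr(star $hPQ)
  refine traceNorm_eq_of_mul_self (hP.add hQ hPQ).nonneg.posSemidef ?_
  have hPh : Pᴴ = P := hP.isSelfAdjoint
  have hQh : Qᴴ = Q := hQ.isSelfAdjoint
  simp only [conjTranspose_sub, hPh, hQh, add_mul, mul_add, sub_mul, mul_sub, hPQ, hQP,
    hP.isIdempotentElem.eq, hQ.isIdempotentElem.eq]
  abel

end TraceNorm

section RankOneProjection

variable {n : Type*} [Fintype n]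

lemma isStarProjection_vecMulVec_self_star {v : n → ℂ} (hv : star v ⬝ᵥ v = 1) :
    IsStarProjection (vecMulVec v (star v)) where
  isIdempotentElem := by rw [IsIdempotentElem, vecMulVec_mul_vecMulVec, hv, one_smul]
  isSelfAdjoint := by
    rw [IsSelfAdjoint, star_eq_conjTranspose, conjTranspose_vecMulVec, star_star]

variable [DecidableEq n]

lemma traceNorm_sub_vecMulVec_of_orthonormal {u v : n → ℂ} (hu : star u ⬝ᵥ u = 1)
    (hv : star v ⬝ᵥ v = 1) (huv : star u ⬝ᵥ v = 0) :
    traceNorm (vecMulVec u (star u) - vecMulVec v (star v)) = 2 := by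
  rw [traceNorm_sub_of_isStarProjection (isStarProjection_vecMulVec_self_star hu)
    (isStarProjection_vecMulVec_self_star hv)
    (by rw [vecMulVec_mul_vecMulVec, huv, zero_smul, vecMulVec_zero]),
    trace_add, trace_vecMulVec, trace_vecMulVec, dotProduct_comm, hu, dotProduct_comm, hv]
  norm_num

end RankOneProjection

lemma ofReal_sqrt_two_inv_mul_self : ((√2 : ℝ) : ℂ)⁻¹ * ((√2 : ℝ) : ℂ)⁻¹ = 2⁻¹ := by
  rw [← mul_inv, ← Complex.ofReal_mul, Real.mul_self_sqrt zero_le_two]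
  norm_num

lemma star_phiPlus_dotProduct_phiPlus : star phiPlus ⬝ᵥ phiPlus = 1 := by
  norm_num [dotProduct, Fintype.sum_prod_type, phiPlus, ofReal_sqrt_two_inv_mul_self]

lemma star_phiMinus_dotProduct_phiMinus : star phiMinus ⬝ᵥ phiMinus = 1 := by
  norm_num [dotProduct, Fintype.sum_prod_type, phiMinus, ofReal_sqrt_two_inv_mul_self]

lemma star_phiPlus_dotProduct_phiMinus : star phiPlus ⬝ᵥ phiMinus = 0 := by
  simp [dotProduct, Fintype.sum_prod_type, phiPlus, phiMinus]

theorem stmt9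
    (ρ₁ ρ₂ σ₁ σ₂ : Matrix (Fin 2 × Fin 2) (Fin 2 × Fin 2) ℂ)
    (hρ₁ : ρ₁ = vecMulVec phiPlus (star phiPlus))
    (hρ₂ : ρ₂ = vecMulVec phiMinus (star phiMinus))
    (hσ₁ : σ₁ = ((3 : ℝ)⁻¹) • (ρ₁ + ((2 : ℝ)⁻¹) • (1 : Matrix (Fin 2 × Fin 2) (Fin 2 × Fin 2) ℂ)))
    (hσ₂ : σ₂ = ((3 : ℝ)⁻¹) • (ρ₂ + ((2 : ℝ)⁻¹) • (1 : Matrix (Fin 2 × Fin 2) (Fin 2 × Fin 2) ℂ))) :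
    traceNorm ((1 / 2 : ℝ) • ρ₁ - (1 / 2 : ℝ) • ρ₂) = 1 ∧
    traceNorm ((1 / 2 : ℝ) • σ₁ - (1 / 2 : ℝ) • σ₂) = 1 / 3 ∧
    (1 + traceNorm ((1 / 2 : ℝ) • ρ₁ - (1 / 2 : ℝ) • ρ₂)) / 2 = 1 ∧
    (1 + traceNorm ((1 / 2 : ℝ) • σ₁ - (1 / 2 : ℝ) • σ₂)) / 2 = 2 / 3 ∧
    (1 + traceNorm ((1 / 2 : ℝ) • ρ₁ - (1 / 2 : ℝ) • ρ₂)) / 2 =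
      (1 + 2) * ((1 + traceNorm ((1 / 2 : ℝ) • σ₁ - (1 / 2 : ℝ) • σ₂)) / 2) - 2 * (1 / 2) := by
  have hBell : traceNorm (ρ₁ - ρ₂) = 2 := by
    rw [hρ₁, hρ₂]
    exact traceNorm_sub_vecMulVec_of_orthonormal star_phiPlus_dotProduct_phiPlus
      star_phiMinus_dotProduct_phiMinus star_phiPlus_dotProduct_phiMinus
  have hρ : traceNorm ((1 / 2 : ℝ) • ρ₁ - (1 / 2 : ℝ) • ρ₂) = 1 := by
    rw [← smul_sub, traceNorm_smul, hBell]
    norm_num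
  have hσ : traceNorm ((1 / 2 : ℝ) • σ₁ - (1 / 2 : ℝ) • σ₂) = 1 / 3 := by
    have hσ_sub : (1 / 2 : ℝ) • σ₁ - (1 / 2 : ℝ) • σ₂ = (1 / 6 : ℝ) • (ρ₁ - ρ₂) := by
      rw [hσ₁, hσ₂]
      module
    rw [hσ_sub, traceNorm_smul, hBell]
    norm_num
  rw [hρ, hσ]
  norm_num
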